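/- Let m ≥ 2 be even, n divisible by m/2, N = 2n/m, and let k be an integer with 2 ≤ k ≤ N/2. Let v be an element of the Pareto front F of m-OJZJ_k and let x ∈ {0,1}^n satisfy f(x) = v. Then for every j ∈ {1, …, m/2}: if v_{2j−1} = k then x^j = 0^N; if v_{2j−1} = N + k then x^j = 1^N; and if 2k ≤ v_{2j−1} ≤ N then k ≤ |x^j|_1 ≤ N − k. -/

import Mathlib

/-- Number of one-bits of a block `b ∈ {0,1}^N`. -/
def ones {N : ℕ} (b : Fin N → Bool) : ℕ :=
  (Finset.univ.filter fun i => b i = true).card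

/-- Number of zero-bits of a block `b ∈ {0,1}^N`. -/
def zeros {N : ℕ} (b : Fin N → Bool) : ℕ :=
  (Finset.univ.filter fun i => b i = false).card

/-- A search point in `{0,1}^n` with `n = M * N`, presented as `M` blocks of length `N`. -/
abbrev Point (M N : ℕ) := Fin M → Fin N → Bool

/-- The `m`-objective function `m`-OJZJ_k with `m = 2 * M` objectives (0-indexed:
objective `i` corresponds to the 1-indexed objective `i+1`, so even `i` is the
"ones" objective and odd `i` the "zeros" objective of block `i / 2`). -/
def mOJZJ (N k : ℕ) {M : ℕ} (x : Point M N) (i : Fin (2 * M)) : ℕ :=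
  let b := x ⟨i.val / 2, by have := i.isLt; omega⟩
  if i.val % 2 = 0 then
    if ones b ≤ N - k ∨ ones b = N then k + ones b else N - ones b
  else
    if zeros b ≤ N - k ∨ zeros b = N then k + zeros b else N - zeros b

/-- `x` weakly dominates `y`. -/
def weaklyDom (N k : ℕ) {M : ℕ} (x y : Point M N) : Prop :=
  ∀ i, mOJZJ N k y i ≤ mOJZJ N k x i

/-- `x` dominates `y`. -/
def dom (N k : ℕ) {M : ℕ} (x y : Point M N) : Prop :=
  weaklyDom N k x y ∧ ∃ i, mOJZJ N k y i < mOJZJ N k x i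

/-- `x` is Pareto-optimal: no search point dominates it. -/
def paretoOptimal (N k : ℕ) {M : ℕ} (x : Point M N) : Prop :=
  ¬ ∃ y : Point M N, dom N k y x

/-- The Pareto front: the set of fitness vectors of Pareto-optimal search points. -/
def paretoFront (N k M : ℕ) : Set (Fin (2 * M) → ℕ) :=
  {v | ∃ x : Point M N, paretoOptimal N k x ∧ mOJZJ N k x = v}

/-
The objective `f_{2j−1}` is the Jump_k function of `|x^j|_1`, so each of the three conditions
on `v_{2j−1} = f_{2j−1}(x)` can be read off the shape of Jump_k: the value `k` is attained only
at `0`, the value `N + k` only at `N`, and values in `[2k, N]` only on the plateau `[k, N − k]`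
(the gap region `(N − k, N)` yields values below `k`).
-/

/-- The Jump_k fitness of a block with `o` one-bits. -/
def jump (N k o : ℕ) : ℕ :=
  if o ≤ N - k ∨ o = N then k + o else N - o

section Jump

variable {N k o : ℕ}

theorem eq_zero_of_jump_eq (ho : o ≤ N) (h : jump N k o = k) : o = 0 := by
  unfold jump at h
  split_ifs at h <;> omega

theorem eq_of_jump_eq_add (ho : o ≤ N) (h : jump N k o = N + k) : o = N := by
  unfold jump at h
  split_ifs at h <;> omega

theorem mem_plateau_of_two_mul_le_jump (ho : o ≤ N) (h₁ : 2 * k ≤ jump N k o)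
    (h₂ : jump N k o ≤ N) :
    k ≤ o ∧ o ≤ N - k := by
  unfold jump at h₁ h₂
  split_ifs at h₁ h₂ <;> omega

end Jump

section Bits

variable {N : ℕ} (b : Fin N → Bool)

theorem ones_le : ones b ≤ N := by
  simpa [ones] using Finset.card_filter_le Finset.univ fun i => b i = true

theorem eq_false_of_ones_eq_zero (h : ones b = 0) : b = fun _ => false := by
  funext i
  simpa using Finset.card_filter_eq_zero_iff.mp h i (Finset.mem_univ i)

theorem eq_true_of_ones_eq (h : ones b = N) : b = fun _ => true := by
  funext i
  have : ones b = (Finset.univ : Finset (Fin N)).card := by rw [h, Finset.card_fin]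
  exact Finset.card_filter_eq_iff.mp this i (Finset.mem_univ i)

end Bits

theorem mOJZJ_two_mul (N k : ℕ) {M : ℕ} (x : Point M N) (j : Fin M) :
    mOJZJ N k x ⟨2 * j.val, by omega⟩ = jump N k (ones (x j)) := by
  simp [mOJZJ, jump]

/-- if `v` is on the Pareto front and `f(x) = v`, then for every block `j`:
`v_{2j−1} = k` forces `x^j = 0^N`, `v_{2j−1} = N + k` forces `x^j = 1^N`, and
`2k ≤ v_{2j−1} ≤ N` forces `k ≤ |x^j|_1 ≤ N − k`
(with 0-indexing, `v_{2j-1}` is `v (2j)`). -/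
theorem pareto_front_genotype (m N k : ℕ)
    (v : Fin (2 * (m / 2)) → ℕ)
    (x : Point (m / 2) N) (hx : mOJZJ N k x = v) (j : Fin (m / 2)) :
    (v ⟨2 * j.val, by have := j.isLt; omega⟩ = k → x j = fun _ => false) ∧
    (v ⟨2 * j.val, by have := j.isLt; omega⟩ = N + k → x j = fun _ => true) ∧
    (2 * k ≤ v ⟨2 * j.val, by have := j.isLt; omega⟩ →
      v ⟨2 * j.val, by have := j.isLt; omega⟩ ≤ N →
      k ≤ ones (x j) ∧ ones (x j) ≤ N - k) := by
  subst hx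
  rw [mOJZJ_two_mul]
  exact ⟨fun h => eq_false_of_ones_eq_zero _ (eq_zero_of_jump_eq (ones_le _) h),
    fun h => eq_true_of_ones_eq _ (eq_of_jump_eq_add (ones_le _) h),
    mem_plateau_of_two_mul_le_jump (ones_le _)⟩
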